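/- arXiv:2212.10738 — 8 statements merged into one kernel-verified Lean document; each statement's English description precedes it below -/
import Mathlib

section
/- Let H be an m × w matrix over ZMod 2 all of whose columns are nonzero and pairwise distinct (the parity-check matrix of a classical code of distance at least 3), and let F be the 3-fold stack of H. In the ideal flagged extraction circuit for a weight-(w+1) stabilizer with flag matrix F, any two error configurations (e₁ₛ, e₁f) and (e₂ₛ, e₂f), each of total weight at most 1, that produce the same observed flag pattern (pat(e₁ₛ) + e₁f = pat(e₂ₛ) + e₂f) satisfy dat(e₁ₛ) + dat(e₂ₛ) ∈ {0, 𝟙}, where 𝟙 is the all-ones vector; that is, the two errors propagate to the data identically up to the full stabilizer, so a unique fault-tolerant correction can be assigned to every flag pattern. -/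
/-- The `r`-fold stack of an `m × w` matrix `H` over `ZMod 2`. -/
def stackMatrix (r m w : ℕ) (H : Matrix (Fin m) (Fin w) (ZMod 2)) :
    Matrix (Fin r × Fin m) (Fin w) (ZMod 2) :=
  fun p j => H p.2 j

/-- Flag pattern of syndrome-error location `p` in the ideal flagged extraction circuit
with flag matrix `F` (the stack of `H`): column `p` of `F` for `1 ≤ p ≤ w`, and `0` for
the boundary locations `p = 0` and `p = w + 1`. -/
def idealPat (r m w : ℕ) (H : Matrix (Fin m) (Fin w) (ZMod 2)) (p : Fin (w + 2)) :
    Fin r × Fin m → ZMod 2 :=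
  if h : 1 ≤ (p : ℕ) ∧ (p : ℕ) ≤ w then
    fun q => stackMatrix r m w H q ⟨(p : ℕ) - 1, by omega⟩
  else 0

/-- Data propagation of syndrome-error location `p`: the indicator vector of
`{p, …, w} ⊆ Fin (w+1)`. -/
def idealDat (w : ℕ) (p : Fin (w + 2)) : Fin (w + 1) → ZMod 2 :=
  fun j => if (p : ℕ) ≤ (j : ℕ) then 1 else 0

/-- Linear extension of `idealPat` to syndrome-error vectors. -/
def idealPatV (r m w : ℕ) (H : Matrix (Fin m) (Fin w) (ZMod 2))
    (e_s : Fin (w + 2) → ZMod 2) : Fin r × Fin m → ZMod 2 :=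
  ∑ p, e_s p • idealPat r m w H p

/-- Linear extension of `idealDat` to syndrome-error vectors. -/
def idealDatV (w : ℕ) (e_s : Fin (w + 2) → ZMod 2) : Fin (w + 1) → ZMod 2 :=
  ∑ p, e_s p • idealDat w p

/-!
A configuration of weight at most one is either a single syndrome fault at an interior location,
with zero flag error, or it leaves the data error in the stabilizer `{0, 𝟙}` (no fault, a flag
fault, or a syndrome fault at the boundary) and shows at most one flag. The pattern of an interior
fault is three copies of a nonzero column of `H`, so it has weight at least three and cannot be
confused with a configuration of the second kind; two interior faults with the same pattern sit at
the same location because the columns of `H` are distinct, and then their data errors cancel.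
-/

lemma eq_zero_or_eq_single_of_hammingNorm_le_one {ι : Type*} [Fintype ι] [DecidableEq ι]
    {e : ι → ZMod 2} (h : hammingNorm e ≤ 1) : e = 0 ∨ ∃ p, e = Pi.single p 1 := by
  rcases eq_or_ne e 0 with h0 | h0
  · exact Or.inl h0
  obtain ⟨p, hp⟩ := Function.ne_iff.mp h0
  have hsupp : ∀ q, e q ≠ 0 → q = p := fun q hq =>
    Finset.card_le_one.mp h q (by simpa using hq) p (by simpa using hp)
  refine Or.inr ⟨p, funext fun q => ?_⟩
  rcases eq_or_ne q p with rfl | hqp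
  · rw [Pi.single_eq_same]
    exact Fin.eq_one_of_ne_zero _ hp
  · rw [Pi.single_eq_of_ne hqp]
    by_contra hq
    exact hqp (hsupp q hq)

lemma hammingNorm_comp_snd {ι κ β : Type*} [Fintype ι] [Fintype κ] [Zero β] [DecidableEq β]
    (v : κ → β) : hammingNorm (fun q : ι × κ => v q.2) = Fintype.card ι * hammingNorm v := by
  simp only [hammingNorm]
  rw [← Finset.univ_product_univ, Finset.filter_product_right (fun k => v k ≠ 0),
    Finset.card_product, Finset.card_univ]

/-- `ZMod 2 ∙ 1 = {0, 𝟙}` is the stabilizer itself: a data error in it is harmless. -/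
lemma mem_span_one_iff {ι : Type*} {x : ι → ZMod 2} :
    x ∈ ZMod 2 ∙ (1 : ι → ZMod 2) ↔ x = 0 ∨ x = 1 := by
  refine ⟨fun hx => ?_, ?_⟩
  · obtain ⟨a, rfl⟩ := Submodule.mem_span_singleton.mp hx
    rcases (by decide : ∀ a : ZMod 2, a = 0 ∨ a = 1) a with rfl | rfl <;> simp
  · rintro (rfl | rfl)
    · exact Submodule.zero_mem _
    · exact Submodule.mem_span_singleton_self _

section IdealCircuit

variable {r m w : ℕ} (H : Matrix (Fin m) (Fin w) (ZMod 2))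

/-- Interior locations `1 ≤ p ≤ w` are reindexed by the column `j = p - 1` of `H` they flag. -/
lemma exists_eq_succ_castSucc_of_interior {p : Fin (w + 2)} (hp : 1 ≤ (p : ℕ) ∧ (p : ℕ) ≤ w) :
    ∃ j : Fin w, p = j.castSucc.succ :=
  ⟨⟨p - 1, by omega⟩, Fin.ext (by simp; omega)⟩

lemma idealPat_succ_castSucc (j : Fin w) :
    idealPat r m w H j.castSucc.succ = fun q => H q.2 j := by
  rw [idealPat, dif_pos (by simp)]
  rfl

lemma idealPat_of_not_interior {p : Fin (w + 2)} (hp : ¬(1 ≤ (p : ℕ) ∧ (p : ℕ) ≤ w)) :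
    idealPat r m w H p = 0 :=
  dif_neg hp

lemma idealDat_mem_span_one_of_not_interior {p : Fin (w + 2)}
    (hp : ¬(1 ≤ (p : ℕ) ∧ (p : ℕ) ≤ w)) : idealDat w p ∈ ZMod 2 ∙ 1 := by
  refine mem_span_one_iff.mpr ?_
  rcases Nat.lt_or_ge (p : ℕ) 1 with hp0 | hp1
  · exact Or.inr (funext fun j => if_pos (by omega))
  · exact Or.inl (funext fun j => if_neg (by omega))

lemma one_lt_hammingNorm_idealPat (hr : 2 ≤ r) (hnz : ∀ j : Fin w, (fun i => H i j) ≠ 0)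
    (j : Fin w) : 1 < hammingNorm (idealPat r m w H j.castSucc.succ) := by
  rw [idealPat_succ_castSucc, hammingNorm_comp_snd (fun i => H i j), Fintype.card_fin]
  have := hammingNorm_pos_iff.mpr (hnz j)
  nlinarith

lemma idealPat_succ_castSucc_injective [NeZero r]
    (hdist : ∀ j₁ j₂ : Fin w, j₁ ≠ j₂ → (fun i => H i j₁) ≠ (fun i => H i j₂)) :
    Function.Injective fun j : Fin w => idealPat r m w H j.castSucc.succ := by
  intro j₁ j₂ h
  by_contra hne
  refine hdist j₁ j₂ hne (funext fun i => ?_)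
  simpa [idealPat_succ_castSucc] using congrFun h (0, i)

lemma idealPatV_single (p : Fin (w + 2)) :
    idealPatV r m w H (Pi.single p 1) = idealPat r m w H p := by
  simp [idealPatV, Pi.single_apply]

lemma idealDatV_single (p : Fin (w + 2)) : idealDatV w (Pi.single p 1) = idealDat w p := by
  simp [idealDatV, Pi.single_apply]

lemma idealDatV_mem_span_one_or_eq_single_interior {e_s : Fin (w + 2) → ZMod 2}
    {e_f : Fin r × Fin m → ZMod 2} (h : hammingNorm e_s + hammingNorm e_f ≤ 1) :
    (idealDatV w e_s ∈ ZMod 2 ∙ 1 ∧ hammingNorm (idealPatV r m w H e_s + e_f) ≤ 1) ∨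
      ∃ j : Fin w, e_s = Pi.single j.castSucc.succ 1 ∧ e_f = 0 := by
  rcases eq_zero_or_eq_single_of_hammingNorm_le_one (e := e_s) (by omega) with rfl | ⟨p, rfl⟩
  · left
    simpa [idealDatV, idealPatV] using h
  have hf : e_f = 0 := by
    have : 0 < hammingNorm (Pi.single p 1 : Fin (w + 2) → ZMod 2) :=
      hammingNorm_pos_iff.mpr (by simp)
    exact hammingNorm_lt_one.mp (by omega)
  subst hf
  by_cases hp : 1 ≤ (p : ℕ) ∧ (p : ℕ) ≤ w
  · obtain ⟨j, rfl⟩ := exists_eq_succ_castSucc_of_interior hp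
    exact Or.inr ⟨j, rfl, rfl⟩
  · left
    rw [idealDatV_single, idealPatV_single, idealPat_of_not_interior H hp]
    exact ⟨idealDat_mem_span_one_of_not_interior hp, by simp⟩

end IdealCircuit

/-- with `H` an `m × w` matrix over `ZMod 2` all of whose columns are nonzero
and pairwise distinct, and `F` its 3-fold stack, any two error configurations of total
weight at most 1 producing the same observed flag pattern propagate to the data
identically up to the full stabilizer (the all-ones vector). -/
theorem ideal_distance_three_flag_gadget (m w : ℕ)
    (H : Matrix (Fin m) (Fin w) (ZMod 2))
    (hnz : ∀ j : Fin w, (fun i => H i j) ≠ 0)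
    (hdist : ∀ j₁ j₂ : Fin w, j₁ ≠ j₂ → (fun i => H i j₁) ≠ (fun i => H i j₂))
    (e₁s e₂s : Fin (w + 2) → ZMod 2) (e₁f e₂f : Fin 3 × Fin m → ZMod 2)
    (h₁ : hammingNorm e₁s + hammingNorm e₁f ≤ 1)
    (h₂ : hammingNorm e₂s + hammingNorm e₂f ≤ 1)
    (hsame : idealPatV 3 m w H e₁s + e₁f = idealPatV 3 m w H e₂s + e₂f) :
    idealDatV w e₁s + idealDatV w e₂s = 0 ∨
      idealDatV w e₁s + idealDatV w e₂s = fun _ => 1 := by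
  refine mem_span_one_iff.mp ?_
  have hheavy := one_lt_hammingNorm_idealPat (r := 3) H (by norm_num) hnz
  rcases idealDatV_mem_span_one_or_eq_single_interior H h₁ with ⟨hd₁, hp₁⟩ | ⟨j₁, rfl, rfl⟩ <;>
    rcases idealDatV_mem_span_one_or_eq_single_interior H h₂ with ⟨hd₂, hp₂⟩ | ⟨j₂, rfl, rfl⟩
  · exact add_mem hd₁ hd₂
  · rw [hsame, idealPatV_single, add_zero] at hp₁
    exact absurd hp₁ (hheavy j₂).not_ge
  · rw [← hsame, idealPatV_single, add_zero] at hp₂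
    exact absurd hp₂ (hheavy j₁).not_ge
  · rw [idealPatV_single, idealPatV_single, add_zero, add_zero] at hsame
    obtain rfl := idealPat_succ_castSucc_injective H hdist hsame
    rw [CharTwo.add_self_eq_zero]
    exact Submodule.zero_mem _
end

section
/- Let t ≥ 1, let H be an m × w matrix over ZMod 2 with H.mulVec v ≠ 0 for every nonzero v : Fin w → ZMod 2 with wt(v) ≤ 2t, and let F be the (2t+1)-fold stack of H. Then every flag pattern determines the syndrome-error locations uniquely: for every P : Fin (2t+1) × Fin m → ZMod 2 and every u₁, u₂ : Fin w → ZMod 2, if wt(P + F.mulVec u₁) + wt(u₁) ≤ t and wt(P + F.mulVec u₂) + wt(u₂) ≤ t, then u₁ = u₂. -/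
/-!
A flag pattern `P` is within weighted distance `t` of the syndrome `F *ᵥ u` of each candidate
error `u`. Two distinct candidates differ by a nonzero `v` of weight at most `2t`, so `H *ᵥ v ≠ 0`,
and stacking `2t + 1` copies of `H` makes `F *ᵥ v` have weight at least `2t + 1`. The triangle
inequality through `P` bounds that weight by `2t`.
-/

open Matrix

section Hamming

variable {ι κ R : Type*} [Fintype ι] [Fintype κ] [DecidableEq R]

theorem hammingNorm_sub [AddGroup R] (x y : ι → R) : hammingNorm (x - y) = hammingDist x y := by
  simp only [hammingNorm, hammingDist, Pi.sub_apply, ne_eq, sub_eq_zero]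

theorem hammingNorm_sub_le [AddGroup R] (x y : ι → R) :
    hammingNorm (x - y) ≤ hammingNorm x + hammingNorm y :=
  calc hammingNorm (x - y) = hammingDist x y := hammingNorm_sub x y
    _ ≤ hammingDist x 0 + hammingDist 0 y := hammingDist_triangle x 0 y
    _ = hammingNorm x + hammingNorm y := by rw [hammingDist_zero_right, hammingDist_zero_left]

theorem hammingDist_eq_hammingNorm_add [Ring R] [CharP R 2] (x y : ι → R) :
    hammingDist x y = hammingNorm (x + y) := by
  rw [← hammingNorm_sub]
  congr 1
  funext i
  exact CharTwo.sub_eq_add (x i) (y i)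

theorem hammingNorm_comp_snd_s3 [Zero R] (x : ι → R) :
    hammingNorm (fun p : κ × ι => x p.2) = Fintype.card κ * hammingNorm x := by
  simp only [hammingNorm, ← Finset.card_univ, ← Finset.card_product]
  congr 1
  ext p
  simp

theorem eq_of_hammingDist_add_hammingNorm_le [Ring R] {F : Matrix κ ι R} {t : ℕ}
    (hF : ∀ v : ι → R, v ≠ 0 → hammingNorm v ≤ 2 * t → 2 * t < hammingNorm (F *ᵥ v))
    {P : κ → R} {u₁ u₂ : ι → R}
    (h₁ : hammingDist P (F *ᵥ u₁) + hammingNorm u₁ ≤ t)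
    (h₂ : hammingDist P (F *ᵥ u₂) + hammingNorm u₂ ≤ t) :
    u₁ = u₂ := by
  by_contra hne
  have hv := hammingNorm_sub_le u₁ u₂
  have hFv := hF (u₁ - u₂) (sub_ne_zero.mpr hne) (by omega)
  have hdist : hammingNorm (F *ᵥ (u₁ - u₂)) ≤ hammingDist P (F *ᵥ u₁) + hammingDist P (F *ᵥ u₂) := by
    rw [mulVec_sub, hammingNorm_sub]
    exact hammingDist_triangle_left _ _ P
  omega

end Hamming

theorem stackMatrix_mulVec (r m w : ℕ) (H : Matrix (Fin m) (Fin w) (ZMod 2))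
    (v : Fin w → ZMod 2) : stackMatrix r m w H *ᵥ v = fun p => (H *ᵥ v) p.2 :=
  rfl

theorem hammingNorm_stackMatrix_mulVec (r m w : ℕ) (H : Matrix (Fin m) (Fin w) (ZMod 2))
    (v : Fin w → ZMod 2) :
    hammingNorm (stackMatrix r m w H *ᵥ v) = r * hammingNorm (H *ᵥ v) := by
  rw [stackMatrix_mulVec]
  simpa only [Fintype.card_fin] using hammingNorm_comp_snd_s3 (κ := Fin r) (H *ᵥ v)

theorem flag_pattern_determines_error_general (t m w : ℕ)
    (H : Matrix (Fin m) (Fin w) (ZMod 2))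
    (hH : ∀ v : Fin w → ZMod 2, v ≠ 0 → hammingNorm v ≤ 2 * t → H.mulVec v ≠ 0)
    (P : Fin (2 * t + 1) × Fin m → ZMod 2) (u₁ u₂ : Fin w → ZMod 2)
    (h₁ : hammingNorm (P + (stackMatrix (2 * t + 1) m w H).mulVec u₁) + hammingNorm u₁ ≤ t)
    (h₂ : hammingNorm (P + (stackMatrix (2 * t + 1) m w H).mulVec u₂) + hammingNorm u₂ ≤ t) :
    u₁ = u₂ := by
  have hF : ∀ v : Fin w → ZMod 2, v ≠ 0 → hammingNorm v ≤ 2 * t →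
      2 * t < hammingNorm (stackMatrix (2 * t + 1) m w H *ᵥ v) := fun v hv hwt => by
    have hHv := hammingNorm_pos_iff.mpr (hH v hv hwt)
    rw [hammingNorm_stackMatrix_mulVec]
    nlinarith
  rw [← hammingDist_eq_hammingNorm_add] at h₁ h₂
  exact eq_of_hammingDist_add_hammingNorm_le hF h₁ h₂

/-- for `H` of distance at least `2t+1` and `F` its `(2t+1)`-fold stack,
every flag pattern determines the syndrome-error locations uniquely: if
`wt (P + F.mulVec u₁) + wt u₁ ≤ t` and `wt (P + F.mulVec u₂) + wt u₂ ≤ t`, then `u₁ = u₂`. -/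
theorem flag_pattern_determines_error (t m w : ℕ) (ht : 1 ≤ t)
    (H : Matrix (Fin m) (Fin w) (ZMod 2))
    (hH : ∀ v : Fin w → ZMod 2, v ≠ 0 → hammingNorm v ≤ 2 * t → H.mulVec v ≠ 0)
    (P : Fin (2 * t + 1) × Fin m → ZMod 2) (u₁ u₂ : Fin w → ZMod 2)
    (h₁ : hammingNorm (P + (stackMatrix (2 * t + 1) m w H).mulVec u₁) + hammingNorm u₁ ≤ t)
    (h₂ : hammingNorm (P + (stackMatrix (2 * t + 1) m w H).mulVec u₂) + hammingNorm u₂ ≤ t) :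
    u₁ = u₂ :=
  flag_pattern_determines_error_general t m w H hH P u₁ u₂ h₁ h₂
end

section
/- Let m ≥ 1, let K = GaloisField 2 m, let α ∈ K be a primitive element (a generator of the unit group Kˣ), and let t, w satisfy 1 ≤ 2t ≤ w ≤ 2^m − 1. Define the BCH parity-check matrix H' : Matrix (Fin (2t)) (Fin w) K by H' i j = α^(((i : ℕ)+1) · (j : ℕ)). Then for every nonzero v : Fin w → ZMod 2 with Hamming weight at most 2t, the vector H'.mulVec v̂ is nonzero, where v̂ : Fin w → K sends j to 1 if v j = 1 and to 0 otherwise. Equivalently, every 𝔽₂-linear combination of at most 2t columns of H' with coefficients not all zero is nonzero, so the binary code {v : H'.mulVec v̂ = 0} has minimum distance at least 2t+1. -/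
/-! A binary vector `v` of weight `s ≤ 2t` with support `J` is annihilated by `H'` exactly when
the power sums `∑_{j ∈ J} (α^j)^(i+1)` vanish for `i < 2t`. Since `w` does not exceed the order
of `α`, the elements `α^j` (`j ∈ J`) are `s` distinct nonzero field elements, and the vanishing of
their first `s` power sums makes the Vandermonde system `∑ₖ xₖ · xₖ^i = 0` (`i < s`) have the
nonzero solution `x`, which is impossible. -/

open Finset Matrix

theorem Finset.eq_empty_of_sum_pow_succ_eq_zero {R : Type*} [CommRing R] [IsDomain R]
    {S : Finset R} (h0 : (0 : R) ∉ S) (h : ∀ i < #S, ∑ a ∈ S, a ^ (i + 1) = 0) : S = ∅ := by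
  set x : Fin #S → R := fun k => S.equivFin.symm k
  have hx : x = 0 := by
    refine eq_zero_of_forall_pow_sum_mul_pow_eq_zero
      (Subtype.val_injective.comp S.equivFin.symm.injective) fun i => ?_
    calc ∑ k, x k * x k ^ (i : ℕ) = ∑ a : S, (a : R) ^ ((i : ℕ) + 1) := by
          simp only [x, ← pow_succ']
          exact Equiv.sum_comp S.equivFin.symm fun a : S => (a : R) ^ ((i : ℕ) + 1)
      _ = 0 := by rw [sum_coe_sort S fun a => a ^ ((i : ℕ) + 1)]; exact h i i.2
  by_contra hS
  obtain ⟨k⟩ : Nonempty (Fin #S) := ⟨⟨0, card_pos.mpr (nonempty_iff_ne_empty.mpr hS)⟩⟩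
  have hk : (S.equivFin.symm k : R) = 0 := congrFun hx k
  exact h0 (hk ▸ (S.equivFin.symm k).2)

theorem Matrix.mulVec_ite_eq_one_apply {K ι κ : Type*} [Semiring K] [Fintype ι]
    (M : Matrix κ ι K) (v : ι → ZMod 2) (i : κ) :
    (M *ᵥ fun j => if v j = 1 then (1 : K) else 0) i = ∑ j with v j ≠ 0, M i j := by
  have hbin : ∀ a : ZMod 2, a = 1 ↔ a ≠ 0 := by decide
  simp only [mulVec, dotProduct, mul_ite, mul_one, mul_zero, sum_filter, hbin]

theorem orderOf_eq_card_sub_one_of_forall_mem_zpowers {K : Type*} [Field K] [Finite K]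
    {u : Kˣ} (hgen : ∀ x : Kˣ, x ∈ Subgroup.zpowers u) : orderOf (u : K) = Nat.card K - 1 := by
  rw [orderOf_units, orderOf_eq_card_of_forall_mem_zpowers hgen, Nat.card_units]

theorem bch_full_parity_check_distance_general (m t w : ℕ) (hm : 1 ≤ m)
    (hw : w ≤ 2 ^ m - 1)
    (α : GaloisField 2 m) (u : (GaloisField 2 m)ˣ)
    (hu : (u : GaloisField 2 m) = α)
    (hgen : ∀ x : (GaloisField 2 m)ˣ, x ∈ Subgroup.zpowers u)
    (v : Fin w → ZMod 2) (hv : v ≠ 0) (hwt : hammingNorm v ≤ 2 * t) :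
    (Matrix.of fun (i : Fin (2 * t)) (j : Fin w) =>
        α ^ (((i : ℕ) + 1) * (j : ℕ))).mulVec
      (fun j => if v j = 1 then (1 : GaloisField 2 m) else 0) ≠ 0 := by
  classical
  intro hsyndrome
  have hord : w ≤ orderOf α := by
    rwa [← hu, orderOf_eq_card_sub_one_of_forall_mem_zpowers hgen, GaloisField.card 2 m (by omega)]
  have hinj : Function.Injective fun j : Fin w => α ^ (j : ℕ) := fun j k hjk =>
    Fin.ext (pow_injOn_Iio_orderOf (j.2.trans_le hord) (k.2.trans_le hord) hjk)
  set S := ({j | v j ≠ 0} : Finset (Fin w)).image fun j : Fin w => α ^ (j : ℕ)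
  have hcard : #S = hammingNorm v := card_image_of_injective _ hinj
  have h0 : (0 : GaloisField 2 m) ∉ S := by
    simp only [S, mem_image, not_exists, not_and]
    exact fun j _ => pow_ne_zero _ (hu ▸ u.ne_zero)
  have hpowsum : ∀ i < #S, ∑ a ∈ S, a ^ (i + 1) = 0 := by
    intro i hi
    have hrow := congrFun hsyndrome ⟨i, by omega⟩
    rw [mulVec_ite_eq_one_apply, Pi.zero_apply] at hrow
    rw [sum_image hinj.injOn, ← hrow]
    simp only [of_apply, ← pow_mul, mul_comm]
  have hS : S = ∅ := eq_empty_of_sum_pow_succ_eq_zero h0 hpowsum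
  exact hv (hammingNorm_eq_zero.mp (by rw [← hcard, hS, card_empty]))

/-- for `K = GaloisField 2 m`, `α` a primitive element of `K` (a generator of
the unit group `Kˣ`), and `1 ≤ 2t ≤ w ≤ 2^m − 1`, the BCH parity-check matrix
`H' i j = α^((i+1)·j)` (with `2t` rows) annihilates no nonzero binary vector of Hamming
weight at most `2t`: the binary code it defines has minimum distance at least `2t+1`. -/
theorem bch_full_parity_check_distance (m t w : ℕ) (hm : 1 ≤ m)
    (ht : 1 ≤ 2 * t) (htw : 2 * t ≤ w) (hw : w ≤ 2 ^ m - 1)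
    (α : GaloisField 2 m) (u : (GaloisField 2 m)ˣ)
    (hu : (u : GaloisField 2 m) = α)
    (hgen : ∀ x : (GaloisField 2 m)ˣ, x ∈ Subgroup.zpowers u)
    (v : Fin w → ZMod 2) (hv : v ≠ 0) (hwt : hammingNorm v ≤ 2 * t) :
    (Matrix.of fun (i : Fin (2 * t)) (j : Fin w) =>
        α ^ (((i : ℕ) + 1) * (j : ℕ))).mulVec
      (fun j => if v j = 1 then (1 : GaloisField 2 m) else 0) ≠ 0 :=
  bch_full_parity_check_distance_general m t w hm hw α u hu hgen v hv hwt
end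

section
/- Let m ≥ 1, let K = GaloisField 2 m, let α ∈ K be a primitive element (a generator of the unit group Kˣ), and let t, w satisfy 1 ≤ 2t ≤ w ≤ 2^m − 1. Define the reduced BCH parity-check matrix H : Matrix (Fin t) (Fin w) K by H i j = α^((2·(i : ℕ)+1) · (j : ℕ)) (only the odd-power rows of the full BCH matrix). Then H has the same column-independence property as the full matrix: for every nonzero v : Fin w → ZMod 2 with Hamming weight at most 2t, the vector H.mulVec v̂ is nonzero, where v̂ : Fin w → K sends j to 1 if v j = 1 and to 0 otherwise. Hence the binary code {v : H.mulVec v̂ = 0} has minimum distance at least 2t+1, with only t rows over K. -/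
/-!
In characteristic 2 the Frobenius map is additive, so the power sums
`p k = ∑_{j ∈ supp v} (α ^ j) ^ k` satisfy `p (2k) = (p k) ^ 2`; the rows of `H` say that the odd
power sums `p 1, p 3, …, p (2t-1)` vanish, hence so do all of `p 1, …, p (2t)`. The points `α ^ j`,
`j < w`, are distinct and nonzero because `α` has order `2 ^ m - 1 ≥ w`, and the invertibility of
the Vandermonde matrix shows that `s ≥ 1` distinct nonzero points cannot have
`p 1 = ⋯ = p s = 0`; since `s = |supp v| ≤ 2t`, the support of `v` is empty.
-/

open Finset

theorem Finset.sum_pow_eq_zero_of_sum_odd_pow_eq_zero {ι R : Type*} [CommSemiring R] [ExpChar R 2]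
    {s : Finset ι} {x : ι → R} {t : ℕ} (hodd : ∀ i < t, ∑ j ∈ s, x j ^ (2 * i + 1) = 0)
    {k : ℕ} (hk : k ≠ 0) (hkt : k ≤ 2 * t) : ∑ j ∈ s, x j ^ k = 0 := by
  induction k using Nat.strong_induction_on with
  | _ k ih =>
    obtain ⟨i, rfl | rfl⟩ := Nat.even_or_odd' k
    · calc ∑ j ∈ s, x j ^ (2 * i) = (∑ j ∈ s, x j ^ i) ^ 2 := by
            simp only [sum_pow_char, ← pow_mul, mul_comm]
        _ = 0 := by rw [ih i (by omega) (by omega) (by omega), zero_pow two_ne_zero]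
    · exact hodd i (by omega)

theorem Finset.eq_empty_of_sum_pow_eq_zero {ι R : Type*} [CommRing R] [IsDomain R]
    {s : Finset ι} {x : ι → R} (hinj : Set.InjOn x s) (hx : ∀ j ∈ s, x j ≠ 0)
    (hsum : ∀ k, k ≠ 0 → k ≤ #s → ∑ j ∈ s, x j ^ k = 0) : s = ∅ := by
  set e := s.equivFin.symm
  have hf : Function.Injective fun i => x (e i) :=
    fun a b hab => e.injective (Subtype.ext (hinj (e a).2 (e b).2 hab))
  have hzero : (fun i => x (e i)) = 0 := by
    refine Matrix.eq_zero_of_forall_pow_sum_mul_pow_eq_zero hf fun i => ?_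
    simp only [← pow_succ', e.sum_comp (fun j : s => x j ^ ((i : ℕ) + 1)),
      sum_coe_sort s fun j => x j ^ ((i : ℕ) + 1)]
    exact hsum _ (by omega) i.2
  by_contra hne
  obtain ⟨j, hj⟩ := nonempty_iff_ne_empty.mpr hne
  exact hx j hj (by simpa [e] using congrFun hzero (s.equivFin ⟨j, hj⟩))

theorem pow_injOn_Iio_of_forall_mem_zpowers {K : Type*} [Field K] [Finite K] (u : Kˣ)
    (hgen : ∀ x : Kˣ, x ∈ Subgroup.zpowers u) :
    Set.InjOn (fun n : ℕ => (u : K) ^ n) (Set.Iio (Nat.card K - 1)) := by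
  have hord : orderOf (u : K) = Nat.card K - 1 := by
    rw [orderOf_units, orderOf_eq_card_of_forall_mem_zpowers hgen, Nat.card_units]
  exact hord ▸ pow_injOn_Iio_orderOf

theorem bch_reduced_parity_check_distance_general (m t w : ℕ) (hm : 1 ≤ m)
    (hw : w ≤ 2 ^ m - 1)
    (α : GaloisField 2 m) (u : (GaloisField 2 m)ˣ)
    (hu : (u : GaloisField 2 m) = α)
    (hgen : ∀ x : (GaloisField 2 m)ˣ, x ∈ Subgroup.zpowers u)
    (v : Fin w → ZMod 2) (hv : v ≠ 0) (hwt : hammingNorm v ≤ 2 * t) :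
    (Matrix.of fun (i : Fin t) (j : Fin w) =>
        α ^ ((2 * (i : ℕ) + 1) * (j : ℕ))).mulVec
      (fun j => if v j = 1 then (1 : GaloisField 2 m) else 0) ≠ 0 := by
  classical
  intro hzero
  set S : Finset (Fin w) := {j | v j ≠ 0}
  have hinj : Set.InjOn (fun j : Fin w => α ^ (j : ℕ)) S := by
    have hcard : Nat.card (GaloisField 2 m) = 2 ^ m := GaloisField.card 2 m (by omega)
    intro a _ b _ hab
    refine Fin.ext (pow_injOn_Iio_of_forall_mem_zpowers u hgen ?_ ?_ (hu ▸ hab)) <;>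
      simp only [Set.mem_Iio, hcard] <;> omega
  have hα : α ≠ 0 := hu ▸ u.ne_zero
  have hodd : ∀ i < t, ∑ j ∈ S, (α ^ (j : ℕ)) ^ (2 * i + 1) = 0 := by
    intro i hi
    have hbin : ∀ a : ZMod 2, a = 1 ↔ a ≠ 0 := by decide
    simpa [Matrix.mulVec, dotProduct, S, sum_filter, hbin, ← pow_mul, mul_comm]
      using congrFun hzero ⟨i, hi⟩
  have hS : S = ∅ := eq_empty_of_sum_pow_eq_zero hinj (fun j _ => pow_ne_zero _ hα)
    fun k hk hkS => sum_pow_eq_zero_of_sum_odd_pow_eq_zero hodd hk (hkS.trans hwt)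
  exact hv (hammingNorm_eq_zero.mp (card_eq_zero.mpr hS))

/-- for `K = GaloisField 2 m`, `α` a primitive element of `K` (a generator of
the unit group `Kˣ`), and `1 ≤ 2t ≤ w ≤ 2^m − 1`, the reduced BCH parity-check matrix
`H i j = α^((2i+1)·j)` (only the odd-power rows, so `t` rows over `K`) annihilates no
nonzero binary vector of Hamming weight at most `2t`: the binary code it defines has
minimum distance at least `2t+1`. -/
theorem bch_reduced_parity_check_distance (m t w : ℕ) (hm : 1 ≤ m)
    (ht : 1 ≤ 2 * t) (htw : 2 * t ≤ w) (hw : w ≤ 2 ^ m - 1)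
    (α : GaloisField 2 m) (u : (GaloisField 2 m)ˣ)
    (hu : (u : GaloisField 2 m) = α)
    (hgen : ∀ x : (GaloisField 2 m)ˣ, x ∈ Subgroup.zpowers u)
    (v : Fin w → ZMod 2) (hv : v ≠ 0) (hwt : hammingNorm v ≤ 2 * t) :
    (Matrix.of fun (i : Fin t) (j : Fin w) =>
        α ^ ((2 * (i : ℕ) + 1) * (j : ℕ))).mulVec
      (fun j => if v j = 1 then (1 : GaloisField 2 m) else 0) ≠ 0 :=
  bch_reduced_parity_check_distance_general m t w hm hw α u hu hgen v hv hwt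
end

section
/- Let a, b : Fin m → ZMod 2 both be nonzero vectors with val(b) ≤ val(a). Then for every k ∈ ℕ, the intermediate vector a + [a + b][k] is nonzero. (In particular, none of the columns arising when unfolding the transition from column a to column b is the zero vector.) -/
/-- Binary value of a vector over `ZMod 2`, with higher indices more significant. -/
def binVal (m : ℕ) (v : Fin m → ZMod 2) : ℕ :=
  ∑ i ∈ Finset.univ.filter (fun i : Fin m => v i = 1), 2 ^ (i : ℕ)

/-- `truncFirst m v k` is the indicator vector of the `k` smallest indices `i` with
`v i ≠ 0` (of all of them if `k` exceeds the Hamming weight of `v`). -/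
def truncFirst (m : ℕ) (v : Fin m → ZMod 2) (k : ℕ) : Fin m → ZMod 2 :=
  fun i =>
    if v i ≠ 0 ∧ (Finset.univ.filter fun j : Fin m => v j ≠ 0 ∧ j < i).card < k then 1
    else 0

/-!
If `a + [a + b][k] = 0` then `a = [c][k]` with `c = a + b`, so `b = c + [c][k]` is the part of
the support of `c` left over by the truncation. Since the truncation keeps an initial segment of
that support, a nonzero `b` contains the top index `M` of `c`, while `a` lives strictly below `M`.
Hence `val a < 2 ^ M ≤ val b`.
-/

open Finset

section binVal

variable {m : ℕ}

theorem binVal_lt_two_pow {v : Fin m → ZMod 2} {n : ℕ} (hv : ∀ i, v i = 1 → (i : ℕ) < n) :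
    binVal m v < 2 ^ n := by
  unfold binVal
  rw [← sum_image fun _ _ _ _ h => Fin.val_injective h]
  refine Nat.geomSum_lt le_rfl ?_
  simp only [mem_image, mem_filter, mem_univ, true_and]
  rintro _ ⟨i, hi, rfl⟩
  exact hv i hi

theorem two_pow_le_binVal {v : Fin m → ZMod 2} {i : Fin m} (hi : v i = 1) :
    2 ^ (i : ℕ) ≤ binVal m v :=
  single_le_sum (f := fun i : Fin m => 2 ^ (i : ℕ)) (fun _ _ => Nat.zero_le _)
    (mem_filter.2 ⟨mem_univ i, hi⟩)

theorem binVal_lt_binVal {u v : Fin m → ZMod 2} {M : Fin m} (hv : v M = 1)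
    (hu : ∀ i, M ≤ i → u i = 0) : binVal m u < binVal m v :=
  (binVal_lt_two_pow fun i hi => by
    by_contra! hle
    simp [hu i (Fin.le_iff_val_le_val.2 hle)] at hi).trans_le (two_pow_le_binVal hv)

end binVal

section truncFirst

variable {m : ℕ} {v : Fin m → ZMod 2} {k : ℕ}

theorem truncFirst_eq_zero_of_eq_zero {i : Fin m} (hi : v i = 0) : truncFirst m v k i = 0 :=
  if_neg fun h => h.1 hi

theorem truncFirst_eq_one_of_le {i j : Fin m} (hij : i ≤ j) (hi : v i ≠ 0)
    (hj : truncFirst m v k j ≠ 0) : truncFirst m v k i = 1 := by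
  unfold truncFirst at hj ⊢
  split_ifs at hj with hjk
  · refine if_pos ⟨hi, lt_of_le_of_lt (card_le_card fun l hl => ?_) hjk.2⟩
    simp only [mem_filter, mem_univ, true_and] at hl ⊢
    exact ⟨hl.1, hl.2.trans_le hij⟩
  · exact absurd rfl hj

theorem exists_top_of_truncFirst_add_ne_zero (h : truncFirst m v k + v ≠ 0) :
    ∃ M, v M = 1 ∧ truncFirst m v k M = 0 ∧ ∀ i, M < i → v i = 0 := by
  obtain ⟨i, hi⟩ := Function.ne_iff.1 h
  have hvi : v i ≠ 0 := fun hvi => hi (by simp [hvi, truncFirst_eq_zero_of_eq_zero hvi])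
  have hne : (univ.filter fun j => v j ≠ 0).Nonempty := ⟨i, by simpa using hvi⟩
  set M := (univ.filter fun j => v j ≠ 0).max' hne
  have hvM : v M ≠ 0 := by simpa using max'_mem _ hne
  have hiM : i ≤ M := le_max' _ i (by simpa using hvi)
  have hti : truncFirst m v k i ≠ 1 := fun hti => hi (by
    rw [Pi.add_apply, hti, Fin.eq_one_of_ne_zero (v i) hvi]; rfl)
  refine ⟨M, Fin.eq_one_of_ne_zero _ hvM, ?_, fun j hMj => ?_⟩
  · by_contra htM
    exact hti (truncFirst_eq_one_of_le hiM hvi htM)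
  · by_contra hvj
    exact not_le.2 hMj (le_max' _ j (by simpa using hvj))

end truncFirst

theorem unfolding_intermediate_columns_nonzero_general (m : ℕ) (a b : Fin m → ZMod 2)
    (hb : b ≠ 0) (hval : binVal m b ≤ binVal m a) (k : ℕ) :
    a + truncFirst m (a + b) k ≠ 0 := by
  intro h
  have hat : a = truncFirst m (a + b) k := funext fun i => CharTwo.add_eq_zero.1 (congrFun h i)
  have hbt : truncFirst m (a + b) k + (a + b) = b := by
    rw [← hat]
    funext i
    simp only [Pi.add_apply, ← add_assoc, CharTwo.add_self_eq_zero, zero_add]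
  obtain ⟨M, hcM, htM, htop⟩ := exists_top_of_truncFirst_add_ne_zero (hbt ▸ hb)
  refine hval.not_gt (binVal_lt_binVal (M := M) ?_ fun i hMi => ?_)
  · rw [← hbt, Pi.add_apply, htM, hcM, zero_add]
  · rw [hat]
    rcases hMi.eq_or_lt with rfl | hMi
    · exact htM
    · exact truncFirst_eq_zero_of_eq_zero (htop i hMi)

/-- if `a` and `b` are nonzero vectors over `ZMod 2` with
`val b ≤ val a`, then for every `k` the intermediate unfolding vector
`a + [a + b][k]` is nonzero. -/
theorem unfolding_intermediate_columns_nonzero (m : ℕ) (a b : Fin m → ZMod 2)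
    (ha : a ≠ 0) (hb : b ≠ 0) (hval : binVal m b ≤ binVal m a) (k : ℕ) :
    a + truncFirst m (a + b) k ≠ 0 :=
  unfolding_intermediate_columns_nonzero_general m a b hb hval k
end

section
/- Let H be an m × w matrix over ZMod 2 none of whose columns is the zero vector. Then there is a reordering of the columns of H for which all unfolding intermediate columns are nonzero: namely, for any enumeration C₁, …, C_w of the columns of H with val(C₁) ≥ val(C₂) ≥ ⋯ ≥ val(C_w) (columns sorted in nonincreasing order of binary value), one has Cᵢ + [Cᵢ + Cᵢ₊₁][k] ≠ 0 for every 1 ≤ i < w and every k ∈ ℕ. -/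
/-! Let `a = Cᵢ`, `b = Cᵢ₊₁` and `d = a + b ≠ 0` (for `d = 0` the truncation vanishes), and let
`j` be the highest index where `a` and `b` differ. Since `val b ≤ val a`, `a j = 1`. If the
truncation `[d][k]` contains `j` it is all of `d`, and `a + d = b ≠ 0`; otherwise it misses `j`,
and `a + [d][k]` keeps the bit `a j = 1`. -/

open Finset Finset.Colex

lemma ZMod.eq_zero_or_eq_one_mod_two (x : ZMod 2) : x = 0 ∨ x = 1 := by
  decide +revert

lemma exists_perm_antitone {α : Type*} [LinearOrder α] {n : ℕ} (f : Fin n → α) :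
    ∃ σ : Equiv.Perm (Fin n), Antitone (f ∘ σ) :=
  ⟨Fin.revPerm.trans (Tuple.sort f), fun _ _ hij => Tuple.monotone_sort f (Fin.rev_le_rev.2 hij)⟩

section binVal

variable {m : ℕ}

lemma binVal_lt_binVal_iff {u v : Fin m → ZMod 2} :
    binVal m u < binVal m v ↔
      toColex ({i | u i = 1} : Finset (Fin m)) < toColex ({i | v i = 1} : Finset (Fin m)) := by
  rw [binVal, binVal, ← sum_image (f := fun i : ℕ => 2 ^ i) Fin.val_injective.injOn,
    ← sum_image (f := fun i : ℕ => 2 ^ i) Fin.val_injective.injOn,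
    geomSum_lt_geomSum_iff_toColex_lt_toColex le_rfl,
    toColex_image_lt_toColex_image Fin.val_strictMono]

lemma binVal_lt_binVal_of_eqOn_Ioi {u v : Fin m → ZMod 2} {j : Fin m} (hu : u j = 0)
    (hv : v j = 1) (habove : Set.EqOn u v (Set.Ioi j)) : binVal m u < binVal m v := by
  rw [binVal_lt_binVal_iff, toColex_lt_toColex_iff_exists_forall_lt]
  refine ⟨j, by simpa using hv, by simp [hu], fun i hiu hiv => ?_⟩
  simp only [mem_filter, mem_univ, true_and] at hiu hiv
  refine lt_of_le_of_ne (not_lt.1 fun hji => hiv (habove hji ▸ hiu)) ?_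
  rintro rfl
  simp [hu] at hiu

lemma apply_eq_one_of_binVal_le {a b : Fin m → ZMod 2} {j : Fin m}
    (hle : binVal m b ≤ binVal m a) (hj : a j ≠ b j) (habove : Set.EqOn a b (Set.Ioi j)) :
    a j = 1 := by
  by_contra h
  have haj : a j = 0 := (ZMod.eq_zero_or_eq_one_mod_two _).resolve_right h
  have hbj : b j = 1 := (ZMod.eq_zero_or_eq_one_mod_two _).resolve_left (haj ▸ hj.symm)
  exact (binVal_lt_binVal_of_eqOn_Ioi haj hbj habove).not_ge hle

end binVal

section truncFirst

variable {m : ℕ}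

lemma truncFirst_zero (k : ℕ) : truncFirst m 0 k = 0 := by
  funext i
  simp [truncFirst]

lemma truncFirst_eq_self_of_card_le {v : Fin m → ZMod 2} {k : ℕ} (h : #{i | v i ≠ 0} ≤ k) :
    truncFirst m v k = v := by
  funext i
  by_cases hi : v i = 0
  · simp [truncFirst, hi]
  · have hsub : ({j | v j ≠ 0 ∧ j < i} : Finset (Fin m)) ⊂ ({j | v j ≠ 0} : Finset (Fin m)) :=
      (ssubset_iff_of_subset (monotone_filter_right _ fun _ _ => And.left)).2
        ⟨i, by simpa using hi, by simp⟩
    have hbelow : #{j | v j ≠ 0 ∧ j < i} < k := (card_lt_card hsub).trans_le h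
    rw [truncFirst, if_pos ⟨hi, hbelow⟩, (ZMod.eq_zero_or_eq_one_mod_two _).resolve_left hi]

lemma truncFirst_apply_eq_zero_of_le {v : Fin m → ZMod 2} {k : ℕ} {i : Fin m}
    (h : k ≤ #{j | v j ≠ 0 ∧ j < i}) : truncFirst m v k i = 0 :=
  if_neg fun hi => h.not_gt hi.2

end truncFirst

theorem add_truncFirst_add_ne_zero {m : ℕ} {a b : Fin m → ZMod 2} (ha : a ≠ 0) (hb : b ≠ 0)
    (hle : binVal m b ≤ binVal m a) (k : ℕ) : a + truncFirst m (a + b) k ≠ 0 := by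
  set d := a + b with hd
  obtain hd0 | hd0 := eq_or_ne d 0
  · rwa [hd0, truncFirst_zero, add_zero]
  set S : Finset (Fin m) := {i | d i ≠ 0}
  have hS : S.Nonempty := by
    obtain ⟨i, hi⟩ := Function.ne_iff.1 hd0
    exact ⟨i, by simpa [S] using hi⟩
  set j := S.max' hS
  have hdj : d j ≠ 0 := (mem_filter.1 (S.max'_mem hS)).2
  have habove : Set.EqOn a b (Set.Ioi j) := fun i (hji : j < i) => by
    have hdi : d i = 0 := by simpa [S] using fun hi => (S.le_max' i hi).not_gt hji
    rwa [hd, Pi.add_apply, ← ZModModule.sub_eq_add, sub_eq_zero] at hdi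
  have haj : a j = 1 :=
    apply_eq_one_of_binVal_le hle (fun h => hdj (by simp [hd, h, ZModModule.add_self])) habove
  obtain hk | hk := le_or_gt #S k
  · rwa [truncFirst_eq_self_of_card_le hk, hd, ← add_assoc, ZModModule.add_self, zero_add]
  · have hSj : S ⊆ insert j ({i | d i ≠ 0 ∧ i < j} : Finset (Fin m)) := fun i hi => by
      rcases (S.le_max' i hi).lt_or_eq with hij | hij
      · exact mem_insert_of_mem (by simpa [S] using ⟨(mem_filter.1 hi).2, hij⟩)
      · exact hij ▸ mem_insert_self _ _
    have htj : truncFirst m d k j = 0 := by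
      refine truncFirst_apply_eq_zero_of_le ?_
      have := (card_le_card hSj).trans (card_insert_le _ _)
      omega
    exact Function.ne_iff.2 ⟨j, by simp [haj, htj]⟩

/-- if `H` is an `m × w` matrix over `ZMod 2` none of whose columns is zero,
then there is a reordering of the columns of `H` in nonincreasing order of binary value,
and for any such enumeration `C₁, …, C_w` (given by a permutation `σ`) all unfolding
intermediate columns `Cᵢ + [Cᵢ + Cᵢ₊₁][k]` are nonzero. -/
theorem sorted_columns_unfolding_nonzero (m w : ℕ)
    (H : Matrix (Fin m) (Fin w) (ZMod 2))
    (hnz : ∀ j : Fin w, (fun i => H i j) ≠ 0) :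
    (∃ σ : Equiv.Perm (Fin w), ∀ i j : Fin w, i ≤ j →
        binVal m (fun r => H r (σ j)) ≤ binVal m (fun r => H r (σ i))) ∧
    (∀ σ : Equiv.Perm (Fin w),
      (∀ i j : Fin w, i ≤ j →
        binVal m (fun r => H r (σ j)) ≤ binVal m (fun r => H r (σ i))) →
      ∀ (i : ℕ) (hi : i + 1 < w) (k : ℕ),
        (fun r => H r (σ ⟨i, by omega⟩)) +
          truncFirst m
            ((fun r => H r (σ ⟨i, by omega⟩)) + fun r => H r (σ ⟨i + 1, hi⟩)) k ≠ 0) := by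
  refine ⟨?_, fun σ hσ i hi k => ?_⟩
  · obtain ⟨σ, hσ⟩ := exists_perm_antitone fun j => binVal m fun r => H r j
    exact ⟨σ, fun _ _ hij => hσ hij⟩
  · exact add_truncFirst_add_ne_zero (hnz _) (hnz _) (hσ _ _ (Fin.mk_le_mk.2 i.le_succ)) k
end

section
/- For all w, t with 1 ≤ 2t ≤ w there is a fault-tolerant flag-gadget circuit for extracting a weight-(w+1) stabilizer of a distance-(2t+1) quantum code using at most (2t+1)·t·⌈log₂(w+1)⌉ flag qubits and one CNOT at a time. Precisely: there exist f ≤ (2t+1)·t·⌈log₂(w+1)⌉, L ∈ ℕ, a sequence of columns c₀, …, c_L : Fin f → ZMod 2 with c₀ = c_L = 0 and any two consecutive columns differing in at most one coordinate, positions 0 ≤ d₀ < d₁ < ⋯ < d_w ≤ L, and a recovery map R : (Fin f → ZMod 2) → (Fin (w+1) → ZMod 2), such that, with F^c the matrix whose p-th column is c_p (p ∈ Fin (L+1)) and D : Matrix (Fin (w+1)) (Fin (L+1)) (ZMod 2) given by D i p = 1 iff p ≤ dᵢ, every pair (e_s : Fin (L+1) → ZMod 2, e_f : Fin f → ZMod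 2) with wt(e_s) + wt(e_f) ≤ t satisfies min(wt x, (w+1) − wt x) ≤ wt(e_s) + wt(e_f), where x := D.mulVec e_s + R(F^c.mulVec e_s + e_f). -/
/-!
The gadget has `f = (2t+1)·m` flags and flag `q` is toggled at the steps `p ≡ q (mod f)`, so
between two consecutive data CNOTs (at the multiples of `f`) every flag moves once to the next
region of the circuit; each block of `m` flags holds the codeword of its region in a binary BCH
code of designed distance `2t + 1`. With minimum-weight decoding it suffices to show that a
syndrome-qubit fault pattern `u` with `wt u + wt (flag syndrome of u) ≤ 2t` has a data effect of
weight at most `(wt u + 1) / 2` modulo the all-ones stabiliser. Among the `2t + 1` blocks some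
block is toggled by no fault of `u` and sees a zero syndrome; on it each fault reads off a
well-defined region label, the codewords of these labels sum to zero, and the BCH property
makes every inner label `1, …, w` occur an even number of times. The data effect is then
constant away from the labels, of which there are at most `(wt u + 1) / 2`.
-/

open Finset Matrix

namespace FlagGadget

theorem zmod_two_eq_zero_or_one (a : ZMod 2) : a = 0 ∨ a = 1 := by
  decide +revert

section Hamming

variable {ι : Type*} [Fintype ι]

theorem hammingNorm_add_le {β : ι → Type*} [∀ i, AddGroup (β i)] [∀ i, DecidableEq (β i)]
    (x y : ∀ i, β i) : hammingNorm (x + y) ≤ hammingNorm x + hammingNorm y := by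
  classical
  refine (card_le_card fun i hi => ?_).trans (card_union_le _ _)
  simp only [mem_filter, mem_univ, true_and, mem_union, Pi.add_apply] at hi ⊢
  by_contra! h
  simp [h] at hi

theorem mulVec_apply_eq_sum_filter {η : Type*} (M : Matrix η ι (ZMod 2)) (u : ι → ZMod 2)
    (i : η) : (M *ᵥ u) i = ∑ p ∈ univ.filter (u · ≠ 0), M i p := by
  rw [sum_filter, mulVec, dotProduct]
  refine sum_congr rfl fun p _ => ?_
  rcases zmod_two_eq_zero_or_one (u p) with h | h <;> simp [h]

/-- The weight of `x` modulo the all-ones vector. -/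
def reducedWeight {n : ℕ} (x : Fin n → ZMod 2) : ℕ := min (hammingNorm x) (n - hammingNorm x)

theorem reducedWeight_le_card_of_eq_const {n : ℕ} (x : Fin n → ZMod 2) (ε : ZMod 2)
    (T : Finset (Fin n)) (hx : ∀ i ∉ T, x i = ε) : reducedWeight x ≤ #T := by
  have hsplit := card_filter_add_card_filter_not (s := univ) (fun i => x i ≠ 0)
  rw [card_univ, Fintype.card_fin] at hsplit
  have hwt : hammingNorm x = #(univ.filter (x · ≠ 0)) := rfl
  rcases zmod_two_eq_zero_or_one ε with rfl | rfl
  · refine (min_le_left _ _).trans (hwt ▸ card_le_card fun i hi => ?_)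
    by_contra hiT
    exact (mem_filter.1 hi).2 (hx i hiT)
  · refine (min_le_right _ _).trans ?_
    rw [hwt, show n - _ = #(univ.filter fun i => ¬x i ≠ 0) by omega]
    refine card_le_card fun i hi => ?_
    by_contra hiT
    simp [hx i hiT] at hi

end Hamming

section Labels

variable {α : Type*} (A : Finset α) (lam ι : α → ℕ)

theorem natCast_card_filter_le_eq_of_notMem_image {i : ℕ}
    (hι : ∀ a ∈ A, lam a ≤ ι a ∧ ι a ≤ lam a + 1)
    (heven : ∀ v, 1 ≤ v → v ≤ i → Even #{a ∈ A | lam a = v}) (hi : i ∉ A.image lam) :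
    (#{a ∈ A | ι a ≤ i} : ZMod 2) = #{a ∈ A | lam a = 0} := by
  have hle : {a ∈ A | ι a ≤ i} = {a ∈ A | lam a ≤ i} := filter_congr fun a ha => by
    have hne : lam a ≠ i := fun h => hi (h ▸ mem_image_of_mem lam ha)
    have := hι a ha
    omega
  have hfiber : ∀ v ≤ i, {a ∈ {a ∈ A | lam a ≤ i} | lam a = v} = {a ∈ A | lam a = v} :=
    fun v hv => by
      rw [filter_filter]
      exact filter_congr fun a _ => by omega
  rw [hle, card_eq_sum_card_fiberwise (t := range (i + 1)) (f := lam)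
    (fun a ha => mem_range.2 (Nat.lt_succ_of_le (mem_filter.1 ha).2)),
    sum_range_succ', hfiber 0 (Nat.zero_le _), Nat.cast_add]
  have hodd : Even (∑ v ∈ range i, #{a ∈ {a ∈ A | lam a ≤ i} | lam a = v + 1}) :=
    even_sum _ fun v hv => by
      have hv := mem_range.1 hv
      rw [hfiber (v + 1) hv]
      exact heven (v + 1) (Nat.succ_pos v) hv
  rw [(ZMod.natCast_eq_zero_iff_even).2 hodd, zero_add]

theorem two_mul_card_image_filter_lt_le (n : ℕ)
    (heven : ∀ v, 1 ≤ v → v < n → Even #{a ∈ A | lam a = v}) :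
    2 * #((A.image lam).filter (· < n)) ≤ #A + 1 := by
  set V := (A.image lam).filter (· < n)
  have hfiber : ∀ v ∈ V, 2 ≤ #{a ∈ A | lam a = v} + if v = 0 then 1 else 0 := by
    intro v hv
    obtain ⟨hvA, hvn⟩ := mem_filter.1 hv
    obtain ⟨a, ha, rfl⟩ := mem_image.1 hvA
    have hpos : 0 < #{b ∈ A | lam b = lam a} := card_pos.2 ⟨a, mem_filter.2 ⟨ha, rfl⟩⟩
    split_ifs with h0
    · omega
    · obtain ⟨k, hk⟩ := heven (lam a) (Nat.pos_of_ne_zero h0) hvn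
      omega
  calc 2 * #V = ∑ v ∈ V, 2 := by rw [sum_const, smul_eq_mul, mul_comm]
    _ ≤ ∑ v ∈ V, (#{a ∈ A | lam a = v} + if v = 0 then 1 else 0) := sum_le_sum hfiber
    _ = ∑ v ∈ V, #{a ∈ A | lam a = v} + ∑ v ∈ V, if v = 0 then 1 else 0 := sum_add_distrib
    _ ≤ #A + 1 := by
      gcongr
      · rw [card_eq_sum_card_image lam A]
        exact sum_le_sum_of_subset (filter_subset _ _)
      · rw [sum_ite_eq']
        split_ifs <;> simp

/-- Labels `v ∈ [1, n)` come in pairs, so the suffix indicators `𝟙[ι a ≤ ·]` sum to a constant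
outside the labels, and there are at most `(#A + 1) / 2` labels below `n`. -/
theorem two_mul_reducedWeight_le_of_even_fibers (n : ℕ)
    (hι : ∀ a ∈ A, lam a ≤ ι a ∧ ι a ≤ lam a + 1)
    (heven : ∀ v, 1 ≤ v → v < n → Even #{a ∈ A | lam a = v}) :
    2 * reducedWeight (fun i : Fin n => (#{a ∈ A | ι a ≤ i} : ZMod 2)) ≤ #A + 1 := by
  set T := univ.filter fun i : Fin n => (i : ℕ) ∈ A.image lam
  have hconst := reducedWeight_le_card_of_eq_const _ _ T fun i hi =>
    natCast_card_filter_le_eq_of_notMem_image A lam ι hι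
      (fun v hv1 hvi => heven v hv1 (hvi.trans_lt i.2)) (by simpa [T] using hi)
  have hT : #T ≤ #((A.image lam).filter (· < n)) :=
    card_le_card_of_injOn Fin.val (fun i hi => by simp_all [T]) Fin.val_injective.injOn
  have := two_mul_card_image_filter_lt_le A lam n heven
  omega

end Labels

section PowerSums

theorem sum_map_pow_eq_sum_count_mul {R : Type*} [CommSemiring R] [DecidableEq R]
    (s : Multiset R) {e : ℕ} (he : e ≠ 0) :
    (s.map (· ^ e)).sum = ∑ y ∈ s.toFinset.erase 0, (s.count y : R) * y ^ e := by
  simp only [Finset.sum_multiset_map_count, nsmul_eq_mul]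
  exact (sum_erase (a := 0) _ (by simp [zero_pow he])).symm

variable {K : Type*} [Field K] [CharP K 2] (s : Multiset K)

theorem sum_map_pow_eq_zero_of_odd (t : ℕ)
    (hodd : ∀ k < t, (s.map (· ^ (2 * k + 1))).sum = 0) :
    ∀ e, 1 ≤ e → e ≤ 2 * t → (s.map (· ^ e)).sum = 0 := by
  intro e
  induction e using Nat.strong_induction_on with
  | _ e ih =>
    intro he1 he2
    obtain ⟨k, rfl | rfl⟩ := Nat.even_or_odd' e
    · have hfrob : (s.map (· ^ (2 * k))).sum = (s.map (· ^ k)).sum ^ 2 := by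
        rw [CharTwo.multiset_sum_sq, Multiset.map_map]
        simp only [Function.comp_def, ← pow_mul, mul_comm]
      rw [hfrob, ih k (by omega) (by omega) (by omega), zero_pow two_ne_zero]
    · exact hodd k (by omega)

/-- The BCH argument: the nonzero values of `s` satisfy a Vandermonde system with unknowns
their multiplicities, since all power sums of exponent `1, …, 2t` vanish. -/
theorem even_count_of_sum_map_pow_odd_eq_zero [DecidableEq K] (t : ℕ)
    (hs : Multiset.card s ≤ 2 * t) (hodd : ∀ k < t, (s.map (· ^ (2 * k + 1))).sum = 0)
    {y : K} (hy : y ≠ 0) : Even (s.count y) := by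
  set V := s.toFinset.erase 0
  by_cases hyV : y ∈ V
  swap
  · rw [Multiset.count_eq_zero.2 fun h => hyV (mem_erase.2 ⟨hy, Multiset.mem_toFinset.2 h⟩)]
    exact .zero
  set σ : Fin #V → K := fun i => V.equivFin.symm i
  have hσ : Function.Injective σ := Subtype.val_injective.comp V.equivFin.symm.injective
  have hV : #V ≤ 2 * t :=
    (card_erase_le.trans (Multiset.toFinset_card_le s)).trans hs
  have hsys : (fun i => (s.count (σ i) : K) * σ i) ᵥ* vandermonde σ = 0 := by
    funext j
    have := sum_map_pow_eq_zero_of_odd s t hodd (j + 1) (by omega) (by omega)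
    rw [sum_map_pow_eq_sum_count_mul s (Nat.succ_ne_zero j), ← sum_coe_sort V,
      ← V.equivFin.symm.sum_comp] at this
    simpa [vecMul, dotProduct, σ, mul_assoc, pow_succ'] using this
  obtain ⟨i, rfl⟩ : ∃ i, σ i = y := ⟨V.equivFin ⟨y, hyV⟩, by simp [σ]⟩
  have hi := congrFun (eq_zero_of_vecMul_eq_zero (det_vandermonde_ne_zero_iff.2 hσ) hsys) i
  rw [Pi.zero_apply, mul_eq_zero, or_iff_left hy, CharP.cast_eq_zero_iff K 2] at hi
  exact even_iff_two_dvd.2 hi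

end PowerSums

/-- `enc v` is the codeword carried by the flags while they are in region `v`; the regions
`0` and `w + 1`, before and after all data CNOTs, carry `0` so that the flags start and end
in `0`. -/
structure IsFlagCode (w t : ℕ) {m : ℕ} (enc : ℕ → Fin m → ZMod 2) : Prop where
  map_zero : enc 0 = 0
  map_succ : enc (w + 1) = 0
  even_count : ∀ s : Multiset ℕ, Multiset.card s ≤ 2 * t → (s.map enc).sum = 0 →
    ∀ v, 1 ≤ v → v ≤ w → Even (s.count v)

theorem exists_labelling {K : Type*} [AddGroup K] [Finite K] {w : ℕ} (hw : w + 1 ≤ Nat.card K) :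
    ∃ x : ℕ → K, x 0 = 0 ∧ x (w + 1) = 0 ∧ ∀ v, 1 ≤ v → v ≤ w → ∀ a, x a = x v ↔ a = v := by
  have : Fintype K := Fintype.ofFinite K
  obtain ⟨g⟩ : Nonempty (Fin (w + 1) ↪ K) := Function.Embedding.nonempty_of_card_le <| by
    rwa [Fintype.card_fin, ← Nat.card_eq_fintype_card]
  have hg : ∀ a b (ha : a ≤ w) (hb : b ≤ w), g ⟨a, by omega⟩ = g ⟨b, by omega⟩ ↔ a = b :=
    fun a b ha hb => g.injective.eq_iff.trans Fin.mk_eq_mk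
  refine ⟨fun v => if h : v ≤ w then g ⟨v, by omega⟩ - g ⟨0, by omega⟩ else 0, by simp, by simp,
    fun v hv1 hvw a => ?_⟩
  by_cases ha : a ≤ w
  · simp [ha, hvw, hg]
  · simp only [ha, hvw, dif_neg, dif_pos, not_false_eq_true]
    rw [eq_comm, sub_eq_zero, hg v 0 hvw (Nat.zero_le _)]
    omega

/-- A binary BCH code: label `v` is sent to the odd powers `x_v, x_v³, …, x_v^(2t-1)` of
distinct elements `x_1, …, x_w` of `𝔽_{2^b}ˣ`, written in coordinates over `𝔽₂`. -/
theorem exists_isFlagCode (w t : ℕ) {b : ℕ} (hb : b ≠ 0) (hw : w + 1 ≤ 2 ^ b) :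
    ∃ enc : ℕ → Fin (t * b) → ZMod 2, IsFlagCode w t enc := by
  classical
  have : Fact (Nat.Prime 2) := ⟨Nat.prime_two⟩
  let K := GaloisField 2 b
  obtain ⟨x, hx0, hxw, hx⟩ := exists_labelling (K := K) <| by rwa [GaloisField.card 2 b hb]
  have hrank : Module.finrank (ZMod 2) (Fin t → K) = t * b := by
    simp [Module.finrank_pi_fintype, GaloisField.finrank 2 hb, K]
  let ψ := (Module.finBasisOfFinrankEq _ _ hrank).equivFun
  refine ⟨fun v => ψ fun k => x v ^ (2 * k.1 + 1), ?_, ?_, ?_⟩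
  · simp [hx0, ← Pi.zero_def]
  · simp [hxw, ← Pi.zero_def]
  intro s hs hsum v hv1 hvw
  replace hsum : (s.map fun v (k : Fin t) => x v ^ (2 * k.1 + 1)).sum = 0 := by
    rwa [← map_eq_zero_iff _ ψ.injective, map_multiset_sum, Multiset.map_map]
  have hodd : ∀ k < t, ((s.map x).map (· ^ (2 * k + 1))).sum = 0 := fun k hk => by
    simpa [Multiset.map_map, Function.comp_def, map_multiset_sum] using
      congrArg (Pi.evalAddMonoidHom (fun _ => K) ⟨k, hk⟩) hsum
  have heven := even_count_of_sum_map_pow_odd_eq_zero (s.map x) t (by simpa using hs) hodd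
    (y := x v) fun h => by
      have := (hx v hv1 hvw 0).1 (h ▸ hx0)
      omega
  rwa [Multiset.count_map, Multiset.filter_congr fun a _ =>
    eq_comm.trans ((hx v hv1 hvw a).trans eq_comm), ← Multiset.count_eq_card_filter_eq] at heven

theorem exists_lt_forall_ne_of_card_add_card_lt {α β : Type*} (A : Finset α) (B : Finset β)
    (g : α → ℕ) (h : β → ℕ) {r : ℕ} (hr : #A + #B < r) :
    ∃ l < r, (∀ a ∈ A, g a ≠ l) ∧ ∀ b ∈ B, h b ≠ l := by
  classical
  obtain ⟨l, hl, hfree⟩ := exists_mem_notMem_of_card_lt_card (s := A.image g ∪ B.image h)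
    (t := range r) <| by
      rw [card_range]
      exact (card_union_le _ _).trans_lt ((add_le_add card_image_le card_image_le).trans_lt hr)
  simp only [mem_union, mem_image, not_or, not_exists, not_and] at hfree
  exact ⟨l, mem_range.1 hl, hfree⟩

/-- Flag `q` is toggled between positions `p` and `p + 1` exactly when `p % f = q`;
`flagRegion f p q` counts its toggles up to position `p`. -/
def flagRegion (f p q : ℕ) : ℕ := p / f + if q < p % f then 1 else 0

theorem flagRegion_zero_left (f q : ℕ) : flagRegion f 0 q = 0 := by
  simp [flagRegion]

theorem flagRegion_mul_self {f : ℕ} (hf : 0 < f) (n q : ℕ) : flagRegion f (n * f) q = n := by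
  simp [flagRegion, Nat.mul_div_cancel _ hf]

theorem flagRegion_succ_of_ne {f p q : ℕ} (hq : q < f) (hne : q ≠ p % f) :
    flagRegion f (p + 1) q = flagRegion f p q := by
  have hf : 0 < f := by omega
  obtain ⟨a, s, hs, rfl⟩ : ∃ a s, s < f ∧ p = f * a + s :=
    ⟨p / f, p % f, Nat.mod_lt _ hf, (Nat.div_add_mod p f).symm⟩
  simp only [flagRegion, add_assoc, Nat.mul_add_div hf, Nat.mul_add_mod, Nat.div_eq_of_lt hs,
    Nat.mod_eq_of_lt hs] at hne ⊢
  rcases Nat.lt_or_ge (s + 1) f with h | h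
  · rw [Nat.div_eq_of_lt h, Nat.mod_eq_of_lt h]
    split_ifs <;> omega
  · rw [show s + 1 = f by omega, Nat.div_self hf, Nat.mod_self]
    split_ifs <;> omega

theorem flagRegion_eq_of_div_eq {f m p q q' : ℕ} (hq : q / m = q' / m)
    (hp : p % f / m ≠ q / m) : flagRegion f p q = flagRegion f p q' := by
  have hlt : ∀ a b, a / m = b / m → p % f / m ≠ a / m → a < p % f → b < p % f := by
    intro a b hab hpa ha
    by_contra! hb
    exact hpa (le_antisymm (hab ▸ Nat.div_le_div_right hb) (Nat.div_le_div_right ha.le))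
  simp only [flagRegion, if_congr (⟨hlt q q' hq hp, hlt q' q hq.symm (hq ▸ hp)⟩) rfl rfl]

theorem le_mul_iff_flagRegion_zero_le {f p i : ℕ} (hf : 0 < f) :
    p ≤ i * f ↔ flagRegion f p 0 ≤ i := by
  obtain ⟨a, s, hs, rfl⟩ : ∃ a s, s < f ∧ p = f * a + s :=
    ⟨p / f, p % f, Nat.mod_lt _ hf, (Nat.div_add_mod p f).symm⟩
  simp only [flagRegion, Nat.mul_add_div hf, Nat.mul_add_mod, Nat.div_eq_of_lt hs,
    Nat.mod_eq_of_lt hs, add_zero]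
  split_ifs with h
  · constructor
    · intro hle
      by_contra! hi
      nlinarith
    · intro hle
      nlinarith
  · rw [show s = 0 by omega, add_zero, add_zero, mul_comm, Nat.mul_le_mul_right_iff hf]

def flagColumn {m : ℕ} (enc : ℕ → Fin m → ZMod 2) (r p : ℕ) (q : Fin (r * m)) : ZMod 2 :=
  enc (flagRegion (r * m) p q) q.modNat

theorem hammingNorm_flagColumn_add_succ_le_one {m : ℕ} (enc : ℕ → Fin m → ZMod 2) (r p : ℕ) :
    hammingNorm (flagColumn enc r p + flagColumn enc r (p + 1)) ≤ 1 := by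
  have hsupp : ∀ q : Fin (r * m), flagColumn enc r p q + flagColumn enc r (p + 1) q ≠ 0 →
      (q : ℕ) = p % (r * m) := fun q hq => by
    by_contra hne
    simp [flagColumn, flagRegion_succ_of_ne q.2 hne, CharTwo.add_self_eq_zero] at hq
  exact card_le_one.2 fun q hq q' hq' =>
    Fin.ext ((hsupp q (mem_filter.1 hq).2).trans (hsupp q' (mem_filter.1 hq').2).symm)

theorem sum_map_enc_flagRegion_eq_zero {m r l : ℕ} (enc : ℕ → Fin m → ZMod 2) (hl : l < r)
    {α : Type*} (A : Finset α) (pos : α → ℕ) (hA : ∀ a ∈ A, pos a % (r * m) / m ≠ l)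
    (hS : ∀ q : Fin (r * m), (q : ℕ) / m = l → ∑ a ∈ A, flagColumn enc r (pos a) q = 0) :
    ((A.val.map fun a => flagRegion (r * m) (pos a) (l * m)).map enc).sum = 0 := by
  funext j
  set q : Fin (r * m) := Fin.mkDivMod ⟨l, hl⟩ j
  have hql : (q : ℕ) / m = l := congrArg Fin.val (Fin.divNat_mkDivMod _ j)
  rw [Pi.zero_apply, ← hS q hql]
  simp only [Multiset.map_map, Function.comp_def, ← Finset.sum_eq_multiset_sum,
    Finset.sum_apply, flagColumn]
  refine sum_congr rfl fun a ha => ?_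
  rw [Fin.modNat_mkDivMod, flagRegion_eq_of_div_eq (q := q) (q' := l * m)
    (by rw [hql, Nat.mul_div_cancel _ j.pos]) (hql ▸ hA a ha)]

theorem two_mul_reducedWeight_le_of_isFlagCode {w t m : ℕ} {enc : ℕ → Fin m → ZMod 2}
    (henc : IsFlagCode w t enc) (hm : 0 < m) {α : Type*} (A : Finset α) (pos : α → ℕ)
    (hA : #A + hammingNorm (fun q => ∑ a ∈ A, flagColumn enc (2 * t + 1) (pos a) q) ≤ 2 * t) :
    2 * reducedWeight (fun i : Fin (w + 1) =>
      (#{a ∈ A | pos a ≤ i * ((2 * t + 1) * m)} : ZMod 2)) ≤ #A + 1 := by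
  set f := (2 * t + 1) * m
  set S := fun q => ∑ a ∈ A, flagColumn enc (2 * t + 1) (pos a) q
  -- a block of flags toggled by no fault and with zero syndrome
  obtain ⟨l, hl, hposA, hposS⟩ := exists_lt_forall_ne_of_card_add_card_lt A
    (univ.filter (S · ≠ 0)) (fun a => pos a % f / m) (fun q : Fin f => (q : ℕ) / m)
    (Nat.lt_succ_of_le hA)
  set lam := fun a => flagRegion f (pos a) (l * m)
  have hsum : ((A.val.map lam).map enc).sum = 0 :=
    sum_map_enc_flagRegion_eq_zero enc hl A pos hposA fun q hq => by
      by_contra h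
      exact hposS q (mem_filter.2 ⟨mem_univ q, h⟩) hq
  have heven : ∀ v, 1 ≤ v → v < w + 1 → Even #{a ∈ A | lam a = v} := fun v hv1 hvw => by
    have := henc.even_count (A.val.map lam) (by simp only [Multiset.card_map, card_val]; omega)
      hsum v hv1 (by omega)
    rwa [Multiset.count_map, ← filter_val, card_val, filter_congr fun _ _ => eq_comm] at this
  have hdata : (fun i : Fin (w + 1) => (#{a ∈ A | pos a ≤ i * f} : ZMod 2)) =
      fun i : Fin (w + 1) => (#{a ∈ A | flagRegion f (pos a) 0 ≤ i} : ZMod 2) := by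
    funext i
    simp_rw [le_mul_iff_flagRegion_zero_le (show 0 < f by positivity)]
  rw [hdata]
  refine two_mul_reducedWeight_le_of_even_fibers A lam _ (w + 1) (fun a _ => ?_) heven
  simp only [lam, flagRegion]
  split_ifs <;> omega

theorem two_mul_reducedWeight_mulVec_le {w t m : ℕ} {enc : ℕ → Fin m → ZMod 2}
    (henc : IsFlagCode w t enc) (hm : 0 < m) {N : ℕ} (u : Fin N → ZMod 2)
    (hu : hammingNorm u + hammingNorm
      ((of fun q (p : Fin N) => flagColumn enc (2 * t + 1) p q) *ᵥ u) ≤ 2 * t) :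
    2 * reducedWeight ((of fun (i : Fin (w + 1)) (p : Fin N) =>
      if (p : ℕ) ≤ i * ((2 * t + 1) * m) then (1 : ZMod 2) else 0) *ᵥ u) ≤
      hammingNorm u + 1 := by
  simp only [funext (mulVec_apply_eq_sum_filter _ u), of_apply, sum_boole] at hu ⊢
  exact two_mul_reducedWeight_le_of_isFlagCode henc hm _ Fin.val hu

/-- A flag pattern `s` is explained by syndrome-qubit faults `e` together with the flag errors
`F e + s`; decode by the data effect of a lightest explanation. -/
noncomputable def minWeightDecoder {ι κ η : Type*} [Fintype ι] [Fintype κ]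
    (F : Matrix κ ι (ZMod 2)) (D : Matrix η ι (ZMod 2)) (s : κ → ZMod 2) : η → ZMod 2 :=
  D *ᵥ Function.argmin fun e : ι → ZMod 2 => hammingNorm e + hammingNorm (F *ᵥ e + s)

theorem reducedWeight_add_minWeightDecoder_le {ι κ : Type*} [Fintype ι] [Fintype κ] {n t : ℕ}
    (F : Matrix κ ι (ZMod 2)) (D : Matrix (Fin n) ι (ZMod 2))
    (hD : ∀ u, hammingNorm u + hammingNorm (F *ᵥ u) ≤ 2 * t →
      2 * reducedWeight (D *ᵥ u) ≤ hammingNorm u + 1)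
    (e_s : ι → ZMod 2) (e_f : κ → ZMod 2) (h : hammingNorm e_s + hammingNorm e_f ≤ t) :
    reducedWeight (D *ᵥ e_s + minWeightDecoder F D (F *ᵥ e_s + e_f)) ≤
      hammingNorm e_s + hammingNorm e_f := by
  set s := F *ᵥ e_s + e_f
  set e := Function.argmin fun e : ι → ZMod 2 => hammingNorm e + hammingNorm (F *ᵥ e + s)
  have hs : F *ᵥ e_s + s = e_f := by
    ext q
    simp [s, ← add_assoc, CharTwo.add_self_eq_zero]
  have hopt : hammingNorm e + hammingNorm (F *ᵥ e + s) ≤ hammingNorm e_s + hammingNorm e_f :=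
    hs ▸ Function.argmin_le (fun e : ι → ZMod 2 => hammingNorm e + hammingNorm (F *ᵥ e + s)) e_s
  have hFu : F *ᵥ (e_s + e) = e_f + (F *ᵥ e + s) := by
    ext q
    simp [← hs, mulVec_add, add_add_add_comm _ (s q), CharTwo.add_self_eq_zero]
  have hu := hD (e_s + e) <| by
    have := hammingNorm_add_le e_s e
    have := hammingNorm_add_le e_f (F *ᵥ e + s)
    rw [hFu]
    omega
  have := hammingNorm_add_le e_s e
  rw [mulVec_add] at hu
  change reducedWeight (D *ᵥ e_s + D *ᵥ e) ≤ _
  omega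

end FlagGadget

open FlagGadget in
/-- for all `w, t` with `1 ≤ 2t ≤ w` there is a fault-tolerant flag-gadget
circuit for extracting a weight-`(w+1)` stabilizer of a distance-`(2t+1)` quantum code
using at most `(2t+1)·t·⌈log₂(w+1)⌉` flag qubits and one CNOT at a time. -/
theorem exists_fault_tolerant_flag_gadget (w t : ℕ) (ht : 1 ≤ 2 * t) (htw : 2 * t ≤ w) :
    ∃ (f L : ℕ) (c : Fin (L + 1) → Fin f → ZMod 2) (d : Fin (w + 1) → ℕ)
      (R : (Fin f → ZMod 2) → Fin (w + 1) → ZMod 2),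
      f ≤ (2 * t + 1) * t * Nat.clog 2 (w + 1) ∧
      c 0 = 0 ∧
      c (Fin.last L) = 0 ∧
      (∀ p : Fin L, hammingNorm (c p.castSucc + c p.succ) ≤ 1) ∧
      (∀ i j : Fin (w + 1), i < j → d i < d j) ∧
      d (Fin.last w) ≤ L ∧
      (∀ (e_s : Fin (L + 1) → ZMod 2) (e_f : Fin f → ZMod 2),
        hammingNorm e_s + hammingNorm e_f ≤ t →
        ∀ x : Fin (w + 1) → ZMod 2,
          x = (Matrix.of fun (i : Fin (w + 1)) (p : Fin (L + 1)) =>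
                  if (p : ℕ) ≤ d i then (1 : ZMod 2) else 0).mulVec e_s +
              R ((Matrix.of fun (q : Fin f) (p : Fin (L + 1)) => c p q).mulVec e_s + e_f) →
          min (hammingNorm x) ((w + 1) - hammingNorm x) ≤
            hammingNorm e_s + hammingNorm e_f) := by
  set b := Nat.clog 2 (w + 1)
  have hb : b ≠ 0 := (Nat.clog_pos one_lt_two (by omega)).ne'
  obtain ⟨enc, henc⟩ := exists_isFlagCode w t hb (Nat.le_pow_clog one_lt_two _)
  have hm : 0 < t * b := Nat.mul_pos (by omega) (Nat.pos_of_ne_zero hb)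
  set f := (2 * t + 1) * (t * b)
  have hf : 0 < f := by positivity
  refine ⟨f, (w + 1) * f, fun p => flagColumn enc (2 * t + 1) p, fun i => i * f,
    minWeightDecoder (of fun q (p : Fin ((w + 1) * f + 1)) => flagColumn enc (2 * t + 1) p q)
      (of fun (i : Fin (w + 1)) (p : Fin ((w + 1) * f + 1)) =>
        if (p : ℕ) ≤ i * f then (1 : ZMod 2) else 0),
    (mul_assoc _ _ _).ge, ?_, ?_, fun p => hammingNorm_flagColumn_add_succ_le_one enc _ p,
    fun i j hij => Nat.mul_lt_mul_of_pos_right hij hf, Nat.mul_le_mul_right _ (by simp), ?_⟩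
  · funext q
    simp [flagColumn, flagRegion_zero_left, henc.map_zero]
  · funext q
    change enc (flagRegion f ((w + 1) * f) q) q.modNat = 0
    rw [flagRegion_mul_self hf, henc.map_succ, Pi.zero_apply]
  · rintro e_s e_f h x rfl
    exact reducedWeight_add_minWeightDecoder_le _ _
      (fun u hu => two_mul_reducedWeight_mulVec_le henc hm u hu) e_s e_f h
end

section
/- Let t ≥ 1, let α be a type, let s : Fin ((t+1)^2) → α, and let B ⊆ Fin ((t+1)^2) with |B| ≤ t be such that s is constant on every maximal interval of consecutive indices disjoint from B. Then some value of s is attained on at least t+1 indices all lying in a single maximal interval disjoint from B; consequently the maximal multiplicity max over a of |{i : s i = a}| is at least t+1, and every value attained on at least t+1 indices (in particular every value of maximal multiplicity) is attained at some index outside B. -/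
/-!
Count, for each index `x`, the points of `B` strictly below `x`. This count takes at most
`#B + 1` values, while `(t + 1)^2 - t > (t + 1) t` indices lie outside `B`, so by pigeonhole
more than `t` of them share the same count. Two indices outside `B` with the same count
have no point of `B` between them, so these indices span an interval disjoint from `B`,
of length at least `t + 1`, on which `s` is constant. A value attained more than
`t ≥ #B` times cannot be attained only on `B`.
-/

open Finset

section GapInterval

variable {α : Type*} [LinearOrder α] {B : Finset α}

theorem card_filter_lt_lt_of_mem {i j k : α} (hk : k ∈ B) (hik : i ≤ k) (hkj : k < j) :
    #{x ∈ B | x < i} < #{x ∈ B | x < j} := by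
  have hsub : {x ∈ B | x < i} ⊆ {x ∈ B | x < j} :=
    monotone_filter_right B fun _ _ hx => hx.trans_le (hik.trans hkj.le)
  refine card_lt_card ((ssubset_iff_of_subset hsub).2 ⟨k, ?_, ?_⟩)
  · exact mem_filter.2 ⟨hk, hkj⟩
  · simp only [mem_filter, not_and, not_lt]
    exact fun _ => hik

theorem exists_Icc_disjoint_of_mul_lt_card [LocallyFiniteOrder α] {S : Finset α} {m : ℕ}
    (h : (#B + 1) * m < #(S \ B)) :
    ∃ i j, m < #(Icc i j) ∧ Disjoint (Icc i j) B := by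
  let below : α → ℕ := fun x => #{y ∈ B | y < x}
  have hmaps : ∀ x ∈ S \ B, below x ∈ range (#B + 1) :=
    fun x _ => mem_range.2 (Nat.lt_succ_of_le (card_filter_le _ _))
  obtain ⟨b, -, hb⟩ := exists_lt_card_fiber_of_mul_lt_card_of_maps_to hmaps
    (by rwa [card_range])
  set F := {x ∈ S \ B | below x = b}
  have hF : F.Nonempty := card_pos.1 (by omega)
  have hmin := mem_filter.1 (F.min'_mem hF)
  have hmax := mem_filter.1 (F.max'_mem hF)
  refine ⟨F.min' hF, F.max' hF, ?_, ?_⟩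
  · exact hb.trans_le (card_le_card fun x hx => mem_Icc.2 ⟨F.min'_le x hx, F.le_max' x hx⟩)
  · refine disjoint_left.2 fun k hk hkB => ?_
    obtain ⟨hik, hkj⟩ := mem_Icc.1 hk
    have hkj' : k < F.max' hF := hkj.lt_of_ne (by rintro rfl; exact (mem_sdiff.1 hmax.1).2 hkB)
    exact (card_filter_lt_lt_of_mem hkB hik hkj').ne (hmin.2.trans hmax.2.symm)

end GapInterval

theorem Fin.exists_gap_of_card_le {t : ℕ} {B : Finset (Fin ((t + 1) ^ 2))} (hB : #B ≤ t) :
    ∃ i j : Fin ((t + 1) ^ 2), i ≤ j ∧ t ≤ (j : ℕ) - i ∧ ∀ k, i ≤ k → k ≤ j → k ∉ B := by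
  have hcard : (#B + 1) * t < #(univ \ B) := by
    have hle : (#B + 1) * t ≤ (t + 1) * t := Nat.mul_le_mul_right t (by omega)
    have hsq : (t + 1) ^ 2 = (t + 1) * t + t + 1 := by ring
    rw [card_univ_sdiff, Fintype.card_fin]
    omega
  obtain ⟨i, j, hlen, hdisj⟩ := exists_Icc_disjoint_of_mul_lt_card hcard
  rw [Fin.card_Icc] at hlen
  refine ⟨i, j, ?_, by omega, fun k hik hkj => disjoint_left.1 hdisj (mem_Icc.2 ⟨hik, hkj⟩)⟩
  exact Fin.le_iff_val_le_val.2 (by omega)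

theorem majority_subpattern_from_error_free_interval_general (t : ℕ)
    (α : Type*) [DecidableEq α] (s : Fin ((t + 1) ^ 2) → α)
    (B : Finset (Fin ((t + 1) ^ 2))) (hB : B.card ≤ t)
    (hconst : ∀ i j : Fin ((t + 1) ^ 2), i ≤ j →
      (∀ k, i ≤ k → k ≤ j → k ∉ B) → s i = s j) :
    (∃ i j : Fin ((t + 1) ^ 2), i ≤ j ∧ t ≤ (j : ℕ) - (i : ℕ) ∧
      (∀ k, i ≤ k → k ≤ j → k ∉ B) ∧ (∀ k, i ≤ k → k ≤ j → s k = s i)) ∧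
    (∃ a : α, t + 1 ≤ (Finset.univ.filter fun i => s i = a).card) ∧
    (∀ a : α, t + 1 ≤ (Finset.univ.filter fun i => s i = a).card →
      ∃ i, i ∉ B ∧ s i = a) := by
  obtain ⟨i, j, hij, hlen, hgap⟩ := Fin.exists_gap_of_card_le hB
  have hsk : ∀ k, i ≤ k → k ≤ j → s k = s i := fun k hik hkj =>
    (hconst i k hik fun m him hmk => hgap m him (hmk.trans hkj)).symm
  refine ⟨⟨i, j, hij, hlen, hgap, hsk⟩, ⟨s i, ?_⟩, fun a ha => ?_⟩
  · have hsub : Icc i j ⊆ univ.filter fun k => s k = s i := fun k hk =>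
      mem_filter.2 ⟨mem_univ k, hsk k (mem_Icc.1 hk).1 (mem_Icc.1 hk).2⟩
    have := card_le_card hsub
    rw [Fin.card_Icc] at this
    omega
  · obtain ⟨k, hk, hkB⟩ := exists_mem_notMem_of_card_lt_card (hB.trans_lt ha)
    exact ⟨k, hkB, (mem_filter.1 hk).2⟩

/-- let `t ≥ 1`, `s : Fin ((t+1)^2) → α`, and `B` a set of at most `t`
indices such that `s` is constant on every (maximal) interval of consecutive indices
disjoint from `B`. Then some value of `s` is attained on at least `t+1` indices all
lying in a single interval disjoint from `B`; consequently the maximal multiplicity of a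
value of `s` is at least `t+1`, and every value attained on at least `t+1` indices is
attained at some index outside `B`. -/
theorem majority_subpattern_from_error_free_interval (t : ℕ) (ht : 1 ≤ t)
    (α : Type*) [DecidableEq α] (s : Fin ((t + 1) ^ 2) → α)
    (B : Finset (Fin ((t + 1) ^ 2))) (hB : B.card ≤ t)
    (hconst : ∀ i j : Fin ((t + 1) ^ 2), i ≤ j →
      (∀ k, i ≤ k → k ≤ j → k ∉ B) → s i = s j) :
    (∃ i j : Fin ((t + 1) ^ 2), i ≤ j ∧ t ≤ (j : ℕ) - (i : ℕ) ∧
      (∀ k, i ≤ k → k ≤ j → k ∉ B) ∧ (∀ k, i ≤ k → k ≤ j → s k = s i)) ∧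
    (∃ a : α, t + 1 ≤ (Finset.univ.filter fun i => s i = a).card) ∧
    (∀ a : α, t + 1 ≤ (Finset.univ.filter fun i => s i = a).card →
      ∃ i, i ∉ B ∧ s i = a) :=
  majority_subpattern_from_error_free_interval_general t α s B hB hconst
end
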